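/- If for some index ℓ in {1, ..., t} there exists an exact cover of X by sets of C_ℓ, then the cross-composition graph G(S) has an induced matching with k = n + |𝒞| - n/3 + 1 edges. -/
import Mathlib


open SimpleGraph

/-- `M` is a matching of `G`, viewed as a set of edges. -/
def MatchingEdges {V : Type*} (G : SimpleGraph V) (M : Set (Sym2 V)) : Prop :=
  M ⊆ G.edgeSet ∧ ∀ e ∈ M, ∀ f ∈ M, e ≠ f → ∀ v : V, v ∈ e → v ∉ f

/-- The set of `M`-saturated vertices. -/
def msat {V : Type*} (M : Set (Sym2 V)) : Set V := {v | ∃ e ∈ M, v ∈ e}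

/-- `M` is an induced matching of `G`. -/
def InducedMatchingEdges {V : Type*} (G : SimpleGraph V) (M : Set (Sym2 V)) : Prop :=
  MatchingEdges G M ∧
    ∀ u v : V, u ∈ msat M → v ∈ msat M → G.Adj u v → s(u, v) ∈ M

/-- The union `𝒞` of the families `C 1, ..., C t`. -/
def allSets (n t : ℕ) (C : Fin t → Finset (Finset (Fin n))) : Finset (Finset (Fin n)) :=
  Finset.univ.biUnion C

/-- Vertex type of the cross-composition graph: `Sum.inl a` is `v_a`;
`Sum.inr (Sum.inl (S, 0))` is the star center `w_S` and `Sum.inr (Sum.inl (S, 1))` is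
the leaf `w_S^*`; `Sum.inr (Sum.inr (Sum.inl ⟨S, x⟩))` is the interface vertex `w_{S,x}`
(for `x ∈ S`); `Sum.inr (Sum.inr (Sum.inr none))` is `q` and
`Sum.inr (Sum.inr (Sum.inr (some i)))` is `p_i`. -/
abbrev CCVert (n t : ℕ) (C : Fin t → Finset (Finset (Fin n))) : Type _ :=
  Fin n ⊕ (({S // S ∈ allSets n t C} × Fin 2) ⊕
    ((Σ S : {S // S ∈ allSets n t C}, {x : Fin n // x ∈ S.val}) ⊕ Option (Fin t)))

/-- The cross-composition graph `G(S)` (with `I` a star centered at `q`). -/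
def CCGraph (n t : ℕ) (C : Fin t → Finset (Finset (Fin n))) :
    SimpleGraph (CCVert n t C) :=
  SimpleGraph.fromRel (fun a b =>
    match a, b with
    -- v_a ~ w_{S,x} iff x = a
    | Sum.inl a, Sum.inr (Sum.inr (Sum.inl ⟨_, x⟩)) => (x : Fin n) = a
    -- w_S ~ w_S^*
    | Sum.inr (Sum.inl (S, _)), Sum.inr (Sum.inl (S', _)) => S = S'
    -- w_S ~ w_{S,x}
    | Sum.inr (Sum.inl (S, i)), Sum.inr (Sum.inr (Sum.inl ⟨S', _⟩)) => S = S' ∧ i = 0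
    -- q ~ p_i
    | Sum.inr (Sum.inr (Sum.inr o)), Sum.inr (Sum.inr (Sum.inr o')) =>
        o = none ∨ o' = none
    -- p_i ~ w_{S,x} iff S ∉ C i
    | Sum.inr (Sum.inr (Sum.inr (some i))), Sum.inr (Sum.inr (Sum.inl ⟨S, _⟩)) =>
        (S : Finset (Fin n)) ∉ C i
    | _, _ => False)

/-- There is an exact cover of `X = {1,...,n}` by sets of the family `F`: a subfamily of
`F` consisting of pairwise disjoint sets whose union is `X`. -/
def ExCov {n : ℕ} (F : Finset (Finset (Fin n))) : Prop :=
  ∃ T ⊆ F, (∀ s ∈ T, ∀ s' ∈ T, s ≠ s' → Disjoint s s') ∧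
    T.biUnion id = Finset.univ

section Proof

variable {n t : ℕ} {C : Fin t → Finset (Finset (Fin n))}

/-- interface vertex -/
def ifV (S : {S // S ∈ allSets n t C}) (x : {x : Fin n // x ∈ S.val}) : CCVert n t C :=
  Sum.inr (Sum.inr (Sum.inl ⟨S, x⟩))

/-- star vertex -/
def wvV (S : {S // S ∈ allSets n t C}) (i : Fin 2) : CCVert n t C := Sum.inr (Sum.inl (S, i))

def qV : CCVert n t C := Sum.inr (Sum.inr (Sum.inr none))

def pV (i : Fin t) : CCVert n t C := Sum.inr (Sum.inr (Sum.inr (some i)))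

lemma ifV_inj {S S' : {S // S ∈ allSets n t C}} {x : {x : Fin n // x ∈ S.val}}
    {x' : {x : Fin n // x ∈ S'.val}} (h : ifV S x = ifV S' x') :
    S = S' ∧ (x : Fin n) = (x' : Fin n) := by
  have h' : (⟨S, x⟩ : Σ S : {S // S ∈ allSets n t C}, {x : Fin n // x ∈ S.val}) = ⟨S', x'⟩ := by
    simpa [ifV] using h
  exact ⟨congrArg Sigma.fst h', congrArg (fun z : (Σ S : {S // S ∈ allSets n t C},
    {x : Fin n // x ∈ S.val}) => (z.2 : Fin n)) h'⟩

end Proof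
set_option maxHeartbeats 1600000 in
/-- If for some index `ℓ` there is an exact cover of `X` by sets of `C ℓ`, then the
cross-composition graph has an induced matching with `k = n + |𝒞| - n/3 + 1` edges. -/
theorem exactCover_to_induced_matching (n t m : ℕ) (hn3 : 3 ∣ n) (hn : 0 < n)
    (C : Fin t → Finset (Finset (Fin n)))
    (hm : ∀ i, (C i).card = m)
    (h3 : ∀ i, ∀ s ∈ C i, s.card = 3)
    (hne : ∀ i j : Fin t, i ≠ j → C i ≠ C j)
    (hcov : ∃ ℓ : Fin t, ExCov (C ℓ)) :
    ∃ M : Set (Sym2 (CCVert n t C)), InducedMatchingEdges (CCGraph n t C) M ∧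
      M.ncard = n + (allSets n t C).card - n / 3 + 1 := by
  classical
  obtain ⟨ℓ, T, hTC, hdisj, hunion⟩ := hcov
  have hallT : ∀ {s}, s ∈ T → s ∈ allSets n t C := fun hs =>
    Finset.mem_biUnion.2 ⟨ℓ, Finset.mem_univ _, hTC hs⟩
  have hex : ∀ a : Fin n, ∃ S, S ∈ T ∧ a ∈ S := by
    intro a
    have h : a ∈ T.biUnion id := by rw [hunion]; exact Finset.mem_univ a
    simpa [Finset.mem_biUnion] using h
  choose Sf hSfT hSfmem using hex
  have hSfC : ∀ a, Sf a ∈ C ℓ := fun a => hTC (hSfT a)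
  set iface : Fin n → CCVert n t C := fun a =>
    ifV ⟨Sf a, hallT (hSfT a)⟩ ⟨a, hSfmem a⟩ with hiface
  have hifinj : ∀ a b : Fin n, iface a = iface b → a = b := by
    intro a b h
    simp only [hiface] at h
    exact (ifV_inj h).2
  set A : Finset {S // S ∈ allSets n t C} :=
    Finset.univ.filter (fun S => S.val ∉ T) with hA
  set Mfin : Finset (Sym2 (CCVert n t C)) :=
    ((Finset.univ.image fun a : Fin n => s(Sum.inl a, iface a)) ∪
      A.image fun S => s(wvV S 0, wvV S 1)) ∪ {s(qV, pV ℓ)} with hMfin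
  have hmem : ∀ e, e ∈ Mfin ↔
      ((∃ a, e = s(Sum.inl a, iface a)) ∨
        (∃ S : {S // S ∈ allSets n t C}, S.val ∉ T ∧ e = s(wvV S 0, wvV S 1)) ∨
        e = s(qV, pV ℓ)) := by
    intro e
    simp only [hMfin, Finset.mem_union, Finset.mem_image, Finset.mem_univ, true_and,
      Finset.mem_singleton, hA, Finset.mem_filter]
    constructor
    · rintro ((⟨a, rfl⟩ | ⟨S, hS, rfl⟩) | rfl)
      · exact Or.inl ⟨a, rfl⟩
      · exact Or.inr (Or.inl ⟨S, hS, rfl⟩)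
      · exact Or.inr (Or.inr rfl)
    · rintro (⟨a, rfl⟩ | ⟨S, hS, rfl⟩ | rfl)
      · exact Or.inl (Or.inl ⟨a, rfl⟩)
      · exact Or.inl (Or.inr ⟨S, hS, rfl⟩)
      · exact Or.inr rfl
  have hsat : ∀ v : CCVert n t C, v ∈ msat (↑Mfin : Set (Sym2 (CCVert n t C))) →
      (∃ a, v = Sum.inl a ∨ v = iface a) ∨
      (∃ S : {S // S ∈ allSets n t C}, S.val ∉ T ∧ (v = wvV S 0 ∨ v = wvV S 1)) ∨
      v = qV ∨ v = pV ℓ := by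
    rintro v ⟨e, he, hv⟩
    rw [Finset.mem_coe, hmem] at he
    rcases he with ⟨a, rfl⟩ | ⟨S, hS, rfl⟩ | rfl <;> rw [Sym2.mem_iff] at hv
    · exact Or.inl ⟨a, hv⟩
    · exact Or.inr (Or.inl ⟨S, hS, hv⟩)
    · exact Or.inr (Or.inr hv)
  refine ⟨↑Mfin, ⟨⟨?_, ?_⟩, ?_⟩, ?_⟩
  · -- M ⊆ edgeSet
    intro e he
    rw [Finset.mem_coe, hmem] at he
    rcases he with ⟨a, rfl⟩ | ⟨S, hS, rfl⟩ | rfl <;> rw [SimpleGraph.mem_edgeSet]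
    · simp [CCGraph, hiface, ifV]
    · simp [CCGraph, wvV]
    · simp [CCGraph, qV, pV]
  · -- matching property
    intro e he f hf hef v hve hvf
    rw [Finset.mem_coe, hmem] at he hf
    apply hef
    rcases he with ⟨a, rfl⟩ | ⟨S, hS, rfl⟩ | rfl
    · rcases hf with ⟨b, rfl⟩ | ⟨S', hS', rfl⟩ | rfl <;>
          rw [Sym2.mem_iff] at hve hvf
      · have hab : a = b := by
          rcases hve with rfl | rfl <;> rcases hvf with h | h
          · exact Sum.inl_injective h
          · exact absurd h (by simp [hiface, ifV])
          · exact absurd h (by simp [hiface, ifV])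
          · exact hifinj _ _ h
        subst hab; rfl
      · exfalso
        rcases hve with rfl | rfl <;> rcases hvf with h | h <;>
          simp [hiface, ifV, wvV] at h
      · exfalso
        rcases hve with rfl | rfl <;> rcases hvf with h | h <;>
          simp [hiface, ifV, qV, pV] at h
    · rcases hf with ⟨b, rfl⟩ | ⟨S', hS', rfl⟩ | rfl <;>
          rw [Sym2.mem_iff] at hve hvf
      · exfalso
        rcases hve with rfl | rfl <;> rcases hvf with h | h <;>
          simp [hiface, ifV, wvV] at h
      · have hSS : S = S' := by
          rcases hve with rfl | rfl <;> rcases hvf with h | h <;>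
            simp [wvV] at h <;> exact h
        subst hSS; rfl
      · exfalso
        rcases hve with rfl | rfl <;> rcases hvf with h | h <;>
          simp [wvV, qV, pV] at h
    · rcases hf with ⟨b, rfl⟩ | ⟨S', hS', rfl⟩ | rfl <;>
          rw [Sym2.mem_iff] at hve hvf
      · exfalso
        rcases hve with rfl | rfl <;> rcases hvf with h | h <;>
          simp [hiface, ifV, qV, pV] at h
      · exfalso
        rcases hve with rfl | rfl <;> rcases hvf with h | h <;>
          simp [wvV, qV, pV] at h
  · -- induced property
    intro u v hu hv hadj
    rw [Finset.mem_coe, hmem]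
    rcases hsat u hu with ⟨a, rfl | rfl⟩ | ⟨S, hS, rfl | rfl⟩ | rfl | rfl
    · -- u = inl a
      rcases hsat v hv with ⟨b, rfl | rfl⟩ | ⟨S', hS', rfl | rfl⟩ | rfl | rfl
      · simp [CCGraph] at hadj
      · simp only [hiface] at hadj ⊢
        simp [CCGraph, ifV] at hadj
        subst hadj
        exact Or.inl ⟨b, rfl⟩
      · simp [CCGraph, wvV] at hadj
      · simp [CCGraph, wvV] at hadj
      · simp [CCGraph, qV] at hadj
      · simp [CCGraph, pV] at hadj
    · -- u = iface a
      rcases hsat v hv with ⟨b, rfl | rfl⟩ | ⟨S', hS', rfl | rfl⟩ | rfl | rfl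
      · simp only [hiface] at hadj ⊢
        simp [CCGraph, ifV] at hadj
        subst hadj
        exact Or.inl ⟨a, Sym2.eq_swap⟩
      · simp only [hiface] at hadj; simp [CCGraph, ifV] at hadj
      · exfalso
        simp only [hiface] at hadj
        simp [CCGraph, ifV, wvV] at hadj
        exact hS' (by rw [congrArg Subtype.val hadj]; exact hSfT a)
      · simp only [hiface] at hadj
        simp [CCGraph, ifV, wvV] at hadj
      · simp only [hiface] at hadj; simp [CCGraph, ifV, qV] at hadj
      · exfalso
        simp only [hiface] at hadj
        simp [CCGraph, ifV, pV] at hadj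
        exact hadj (hSfC a)
    · -- u = wvV S 0
      rcases hsat v hv with ⟨b, rfl | rfl⟩ | ⟨S', hS', rfl | rfl⟩ | rfl | rfl
      · simp [CCGraph, wvV] at hadj
      · exfalso
        simp only [hiface] at hadj
        simp [CCGraph, ifV, wvV] at hadj
        exact hS (by rw [congrArg Subtype.val hadj]; exact hSfT b)
      · exfalso
        simp [CCGraph, wvV] at hadj
        rcases hadj.2 with h | h
        · exact hadj.1 h
        · exact hadj.1 h.symm
      · have hSS : S = S' := by
          simp [CCGraph, wvV] at hadj
          rcases hadj with h | h
          · exact h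
          · exact h.symm
        subst hSS
        exact Or.inr (Or.inl ⟨S, hS, rfl⟩)
      · simp [CCGraph, wvV, qV] at hadj
      · simp [CCGraph, wvV, pV] at hadj
    · -- u = wvV S 1
      rcases hsat v hv with ⟨b, rfl | rfl⟩ | ⟨S', hS', rfl | rfl⟩ | rfl | rfl
      · simp [CCGraph, wvV] at hadj
      · simp only [hiface] at hadj
        simp [CCGraph, ifV, wvV] at hadj
      · have hSS : S = S' := by
          simp [CCGraph, wvV] at hadj
          rcases hadj with h | h
          · exact h
          · exact h.symm
        subst hSS
        exact Or.inr (Or.inl ⟨S, hS, Sym2.eq_swap⟩)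
      · exfalso
        simp [CCGraph, wvV] at hadj
        rcases hadj.2 with h | h
        · exact hadj.1 h
        · exact hadj.1 h.symm
      · simp [CCGraph, wvV, qV] at hadj
      · simp [CCGraph, wvV, pV] at hadj
    · -- u = qV
      rcases hsat v hv with ⟨b, rfl | rfl⟩ | ⟨S', hS', rfl | rfl⟩ | rfl | rfl
      · simp [CCGraph, qV] at hadj
      · simp only [hiface] at hadj; simp [CCGraph, ifV, qV] at hadj
      · simp [CCGraph, wvV, qV] at hadj
      · simp [CCGraph, wvV, qV] at hadj
      · exact absurd hadj (SimpleGraph.irrefl _)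
      · exact Or.inr (Or.inr rfl)
    · -- u = pV ℓ
      rcases hsat v hv with ⟨b, rfl | rfl⟩ | ⟨S', hS', rfl | rfl⟩ | rfl | rfl
      · simp [CCGraph, pV] at hadj
      · exfalso
        simp only [hiface] at hadj
        simp [CCGraph, ifV, pV] at hadj
        exact hadj (hSfC b)
      · simp [CCGraph, wvV, pV] at hadj
      · simp [CCGraph, wvV, pV] at hadj
      · exact Or.inr (Or.inr Sym2.eq_swap)
      · exact absurd hadj (SimpleGraph.irrefl _)
  · -- cardinality
    rw [Set.ncard_coe_finset]
    have hTcard : 3 * T.card = n := by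
      have h1 : (T.biUnion id).card = ∑ s ∈ T, (id s).card :=
        Finset.card_biUnion (fun x hx y hy hxy => hdisj x hx y hy hxy)
      rw [hunion] at h1
      have h2 : ∑ s ∈ T, (id s).card = ∑ _s ∈ T, 3 :=
        Finset.sum_congr rfl (fun s hs => h3 ℓ s (hTC hs))
      rw [h2, Finset.sum_const, Finset.card_univ, Fintype.card_fin, smul_eq_mul] at h1
      omega
    have hfT : (Finset.univ.filter
        (fun S : {S // S ∈ allSets n t C} => S.val ∈ T)).card = T.card := by
      apply Finset.card_bij (fun S _ => S.val)
      · intro S hS; exact (Finset.mem_filter.1 hS).2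
      · intro S _ S' _ h; exact Subtype.ext h
      · intro s hs; exact ⟨⟨s, hallT hs⟩, Finset.mem_filter.2 ⟨Finset.mem_univ _, hs⟩, rfl⟩
    have hcu : (Finset.univ : Finset {S // S ∈ allSets n t C}).card =
        (allSets n t C).card := by
      rw [Finset.card_univ]; exact Fintype.card_coe _
    have hsplit := Finset.card_filter_add_card_filter_not
      (s := (Finset.univ : Finset {S // S ∈ allSets n t C}))
      (p := fun S => S.val ∈ T)
    have hAcard : A.card + T.card = (allSets n t C).card := by
      rw [hA]
      omega
    have hTle : T.card ≤ (allSets n t C).card :=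
      Finset.card_le_card (fun s hs => hallT hs)
    have hd1 : Disjoint (Finset.univ.image fun a : Fin n => s(Sum.inl a, iface a))
        (A.image fun S => s(wvV S 0, wvV S 1)) := by
      simp only [Finset.disjoint_left, Finset.mem_image]
      rintro e ⟨a, -, rfl⟩ ⟨S, -, h⟩
      simp [hiface, ifV, wvV, Sym2.eq_iff] at h
    have hd2 : Disjoint ((Finset.univ.image fun a : Fin n => s(Sum.inl a, iface a)) ∪
        A.image fun S => s(wvV S 0, wvV S 1)) ({s(qV, pV ℓ)} : Finset _) := by
      simp only [Finset.disjoint_left, Finset.mem_union, Finset.mem_image,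
        Finset.mem_singleton]
      rintro e (⟨a, -, rfl⟩ | ⟨S, -, rfl⟩) h <;>
        simp [hiface, ifV, wvV, qV, pV, Sym2.eq_iff] at h
    have hinj1 : Function.Injective (fun a : Fin n => s(Sum.inl a, iface a)) := by
      intro a b h
      simp only [Sym2.eq_iff] at h
      rcases h with ⟨h1, -⟩ | ⟨h1, -⟩
      · exact Sum.inl_injective h1
      · exact absurd h1 (by simp [hiface, ifV])
    have hinj2 : Function.Injective
        (fun S : {S // S ∈ allSets n t C} => s(wvV S 0, wvV S 1)) := by
      intro S S' h
      simp only [Sym2.eq_iff] at h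
      rcases h with ⟨h1, -⟩ | ⟨h1, -⟩
      · simpa [wvV] using h1
      · exact absurd h1 (by simp [wvV])
    rw [hMfin, Finset.card_union_of_disjoint hd2, Finset.card_union_of_disjoint hd1,
      Finset.card_singleton, Finset.card_image_of_injective _ hinj1,
      Finset.card_image_of_injective _ hinj2, Finset.card_univ, Fintype.card_fin]
    omega
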